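/- arXiv:2001.00259 — 2 statements merged into one kernel-verified Lean document; each statement's English description precedes it below -/
import Mathlib

section
/- Let $N \ge 1$ and let $n : \{1,\dots,N\} \to \mathbb{N}$ be nonnegative integers. Then the following are equivalent: (i) there exists a subset $A \subseteq \{1,\dots,N\}$ with $2\sum_{f \in A} n_f = \sum_{f=1}^{N} n_f$ (the Partition instance $n_1,\dots,n_N$ is a yes-instance); (ii) there exists a subset $A \subseteq \{1,\dots,N\}$ with $2\sum_{f \in A} n_f \le \sum_{f=1}^{N} n_f$ and $2\left(\sum_{f \in A} 3 n_f + \sum_{f \notin A} 4 n_f\right) \le 7 \sum_{f=1}^{N} n_f$. -/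
/-- Correctness of the reduction from Partition used in the proof of Theorem 1
(NP-hardness of SCCD): the Partition instance `n` is a yes-instance iff some
capacity-feasible cached subset achieves total downloading cost at most
`(7/2) ∑ n_f`, i.e. `2 (∑_{f ∈ A} 3 n_f + ∑_{f ∉ A} 4 n_f) ≤ 7 ∑ n_f`. -/
theorem partition_iff_caching_cost
    (N : ℕ) (hN : 1 ≤ N) (n : Fin N → ℕ) :
    (∃ A : Finset (Fin N), 2 * ∑ f ∈ A, n f = ∑ f, n f) ↔
    (∃ A : Finset (Fin N),
      2 * ∑ f ∈ A, n f ≤ ∑ f, n f ∧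
      2 * ((∑ f ∈ A, 3 * n f) + ∑ f ∈ Aᶜ, 4 * n f) ≤ 7 * ∑ f, n f) := by
  have key : ∀ A : Finset (Fin N), ∑ f ∈ A, n f + ∑ f ∈ Aᶜ, n f = ∑ f, n f :=
    fun A => Finset.sum_add_sum_compl A n
  constructor
  · rintro ⟨A, hA⟩
    refine ⟨A, hA.le, ?_⟩
    have h := key A
    simp only [← Finset.mul_sum]
    omega
  · rintro ⟨A, h1, h2⟩
    refine ⟨A, ?_⟩
    have h := key A
    simp only [← Finset.mul_sum] at h2
    omega
end

section
/- Let $T \ge 1$ and $F \ge 1$, let each request $r$ in a finite set $R$ have a requested content $h_r \in \{1,\dots,F\}$, a request slot $o_r$ and deadline $d_r$ with $1 \le o_r \le d_r \le T$, let $l_f > 0$ be content sizes and $c_s > c_b > 0$ be per-unit costs. Fix a binary caching schedule $x : \{1,\dots,T\} \times \{1,\dots,F\} \to \{0,1\}$ and set $x_{0f} := 0$ for all $f$. Then the minimum, over all binary $(a, y)$ with $a : \{1,\dots,T\} \times \{1,\dots,F\} \to \{0,1\}$ and $y_r : \{o_r,\dots,d_r\} \to \{0,1\}$ satisfying $a_{tf}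 \ge x_{tf} - x_{(t-1)f}$, $a_{tf} \le x_{tf}$, $a_{tf} \le 1 - x_{(t-1)f}$ for $t \ge 2$, $a_{1f} = x_{1f}$, $y_{rt} \le x_{t,h_r}$ for all $t \in [o_r,d_r]$, and $\sum_{t=o_r}^{d_r} y_{rt} \le 1$, of the objective $\sum_{r \in R} l_{h_r}\left[c_b \sum_{t=o_r}^{d_r} y_{rt} + c_s\left(1 - \sum_{t=o_r}^{d_r} y_{rt}\right)\right] + \sum_{t=1}^{T}\sum_{f=1}^{F} l_f (c_s - c_b)\, a_{tf}$, equals the closed form $\sum_{r \in R} l_{h_r}\left(c_s - (c_s - c_b)\cdot \mathbf{1}[\exists\, t \in [o_r,d_r],\ x_{t,h_r} = 1]\right) + \sum_{t=1}^{T}\sum_{f=1}^{F} l_f (c_s - c_b)\, x_{tf}(1 - x_{(t-1)f})$. -/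
open Classical in
/-- Equivalence of the ILP formulation (5) of SCCD and its column-based
reformulation (6): for a fixed binary caching schedule `x`, minimizing the
ILP objective over the auxiliary update variables `a` and serving variables
`y` subject to constraints (5c)–(5h) yields the closed-form per-sequence cost,
in which each request pays `cb * l` if its content is cached at some slot of
its window and `cs * l` otherwise, and each fresh caching of content `f` at
slot `t` (i.e. `x t f = 1`, `x (t-1) f = 0`) pays `l f * (cs - cb)`. -/
theorem ilp_cost_closed_form
    (T F : ℕ) (hT : 1 ≤ T) (hF : 1 ≤ F)
    {R : Type*} [Fintype R]
    (h : R → ℕ) (hh : ∀ r, h r ∈ Finset.Icc 1 F)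
    (o d : R → ℕ) (ho : ∀ r, 1 ≤ o r) (hod : ∀ r, o r ≤ d r)
    (hd : ∀ r, d r ≤ T)
    (l : ℕ → ℝ) (hl : ∀ f ∈ Finset.Icc 1 F, 0 < l f)
    (cs cb : ℝ) (hcb : 0 < cb) (hcbs : cb < cs)
    (x : ℕ → ℕ → ℝ)
    (hxbin : ∀ t ∈ Finset.Icc 1 T, ∀ f ∈ Finset.Icc 1 F, x t f = 0 ∨ x t f = 1)
    (hx0 : ∀ f, x 0 f = 0) :
    IsLeast
      {c : ℝ | ∃ a : ℕ → ℕ → ℝ, ∃ y : R → ℕ → ℝ,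
        (∀ t ∈ Finset.Icc 1 T, ∀ f ∈ Finset.Icc 1 F, a t f = 0 ∨ a t f = 1) ∧
        (∀ t ∈ Finset.Icc 2 T, ∀ f ∈ Finset.Icc 1 F,
          x t f - x (t - 1) f ≤ a t f ∧
          a t f ≤ x t f ∧
          a t f ≤ 1 - x (t - 1) f) ∧
        (∀ f ∈ Finset.Icc 1 F, a 1 f = x 1 f) ∧
        (∀ r : R, ∀ t ∈ Finset.Icc (o r) (d r), y r t = 0 ∨ y r t = 1) ∧
        (∀ r : R, ∀ t ∈ Finset.Icc (o r) (d r), y r t ≤ x t (h r)) ∧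
        (∀ r : R, ∑ t ∈ Finset.Icc (o r) (d r), y r t ≤ 1) ∧
        c = (∑ r : R, l (h r) *
              (cb * (∑ t ∈ Finset.Icc (o r) (d r), y r t) +
               cs * (1 - ∑ t ∈ Finset.Icc (o r) (d r), y r t))) +
            ∑ t ∈ Finset.Icc 1 T, ∑ f ∈ Finset.Icc 1 F,
              l f * (cs - cb) * a t f}
      ((∑ r : R, l (h r) *
          (cs - (cs - cb) *
            (if ∃ t ∈ Finset.Icc (o r) (d r), x t (h r) = 1 then (1 : ℝ) else 0))) +
        ∑ t ∈ Finset.Icc 1 T, ∑ f ∈ Finset.Icc 1 F,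
          l f * (cs - cb) * (x t f * (1 - x (t - 1) f))) := by
  classical
  -- window membership facts
  have hwin : ∀ (r : R) (t : ℕ), t ∈ Finset.Icc (o r) (d r) → t ∈ Finset.Icc 1 T := by
    intro r t ht
    rw [Finset.mem_Icc] at ht ⊢
    exact ⟨le_trans (ho r) ht.1, le_trans ht.2 (hd r)⟩
  have hxwin : ∀ (r : R) (t : ℕ), t ∈ Finset.Icc (o r) (d r) →
      x t (h r) = 0 ∨ x t (h r) = 1 := fun r t ht => hxbin t (hwin r t ht) (h r) (hh r)
  constructor
  · -- membership
    set P : R → Prop := fun r => ∃ t ∈ Finset.Icc (o r) (d r), x t (h r) = 1 with hP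
    refine ⟨fun t f => x t f * (1 - x (t - 1) f),
      fun r t => if hp : P r then (if t = hp.choose then (1:ℝ) else 0) else 0,
      ?_, ?_, ?_, ?_, ?_, ?_, ?_⟩
    · intro t ht f hf
      have h1 := hxbin t ht f hf
      have h2 : x (t - 1) f = 0 ∨ x (t - 1) f = 1 := by
        obtain ⟨ht1, ht2⟩ := Finset.mem_Icc.mp ht
        rcases eq_or_lt_of_le ht1 with heq | hlt
        · left; rw [← heq]; exact hx0 f
        · exact hxbin (t - 1) (Finset.mem_Icc.mpr ⟨Nat.le_sub_one_of_lt hlt,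
            le_trans (Nat.sub_le t 1) ht2⟩) f hf
      rcases h1 with h1 | h1 <;> rcases h2 with h2 | h2 <;> simp only [h1, h2] <;> norm_num
    · intro t ht f hf
      obtain ⟨ht1, ht2⟩ := Finset.mem_Icc.mp ht
      have h1 := hxbin t (Finset.mem_Icc.mpr ⟨le_trans one_le_two ht1, ht2⟩) f hf
      have h2 : x (t - 1) f = 0 ∨ x (t - 1) f = 1 :=
        hxbin (t - 1) (Finset.mem_Icc.mpr ⟨Nat.le_sub_one_of_lt ht1,
          le_trans (Nat.sub_le t 1) ht2⟩) f hf
      refine ⟨?_, ?_, ?_⟩ <;> rcases h1 with h1 | h1 <;> rcases h2 with h2 | h2 <;>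
        simp only [h1, h2] <;> norm_num
    · intro f hf
      simp [hx0 f]
    · intro r t ht
      beta_reduce
      by_cases hp : P r
      · rw [dif_pos hp]; split_ifs <;> simp
      · rw [dif_neg hp]; simp
    · intro r t ht
      beta_reduce
      by_cases hp : P r
      · rw [dif_pos hp]
        by_cases hte : t = hp.choose
        · rw [if_pos hte, hte, hp.choose_spec.2]
        · rw [if_neg hte]
          rcases hxwin r t ht with h1 | h1 <;> rw [h1] <;> norm_num
      · rw [dif_neg hp]
        rcases hxwin r t ht with h1 | h1 <;> rw [h1] <;> norm_num
    · intro r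
      by_cases hp : P r
      · simp only [hp, dif_pos]
        rw [Finset.sum_ite_eq' (Finset.Icc (o r) (d r)) hp.choose (fun _ => (1:ℝ))]
        rw [if_pos hp.choose_spec.1]
      · simp [hp]
    · have hsum : ∀ r : R, (∑ t ∈ Finset.Icc (o r) (d r),
          (if hp : P r then (if t = hp.choose then (1:ℝ) else 0) else 0)) =
          if P r then (1:ℝ) else 0 := by
        intro r
        by_cases hp : P r
        · simp only [hp, dif_pos, if_pos]
          rw [Finset.sum_ite_eq' (Finset.Icc (o r) (d r)) hp.choose (fun _ => (1:ℝ))]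
          rw [if_pos hp.choose_spec.1]
        · simp [hp]
      have : ∀ r : R, l (h r) * (cs - (cs - cb) * (if P r then (1:ℝ) else 0)) =
          l (h r) * (cb * (∑ t ∈ Finset.Icc (o r) (d r),
            (if hp : P r then (if t = hp.choose then (1:ℝ) else 0) else 0)) +
           cs * (1 - ∑ t ∈ Finset.Icc (o r) (d r),
            (if hp : P r then (if t = hp.choose then (1:ℝ) else 0) else 0))) := by
        intro r
        rw [hsum r]
        by_cases hp : P r <;> simp [hp] <;> ring
      rw [Finset.sum_congr rfl fun r _ => this r]
  · -- lower bound
    rintro c ⟨a, y, hab, hac, ha1, hyb, hyx, hys, rfl⟩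
    apply add_le_add
    · apply Finset.sum_le_sum
      intro r _
      have hl' := hl (h r) (hh r)
      have hS0 : (0:ℝ) ≤ ∑ t ∈ Finset.Icc (o r) (d r), y r t := by
        apply Finset.sum_nonneg
        intro t ht
        rcases hyb r t ht with h1 | h1 <;> rw [h1] <;> norm_num
      have key : (∑ t ∈ Finset.Icc (o r) (d r), y r t) ≤
          (if ∃ t ∈ Finset.Icc (o r) (d r), x t (h r) = 1 then (1:ℝ) else 0) := by
        by_cases hp : ∃ t ∈ Finset.Icc (o r) (d r), x t (h r) = 1
        · rw [if_pos hp]; exact hys r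
        · rw [if_neg hp]
          have : ∀ t ∈ Finset.Icc (o r) (d r), y r t = 0 := by
            intro t ht
            have hx0' : x t (h r) = 0 := by
              rcases hxwin r t ht with h1 | h1
              · exact h1
              · exact absurd ⟨t, ht, h1⟩ hp
            have := hyx r t ht
            rcases hyb r t ht with h1 | h1
            · exact h1
            · rw [h1, hx0'] at this; linarith
          rw [Finset.sum_congr rfl this]
          simp
      have hcc : (0:ℝ) < cs - cb := by linarith
      nlinarith [mul_le_mul_of_nonneg_left key (le_of_lt hcc)]
    · apply Finset.sum_le_sum
      intro t ht
      apply Finset.sum_le_sum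
      intro f hf
      have hl' := hl f hf
      have hcc : (0:ℝ) ≤ cs - cb := by linarith
      have hcoef : (0:ℝ) ≤ l f * (cs - cb) := mul_nonneg (le_of_lt hl') hcc
      have key : x t f * (1 - x (t - 1) f) ≤ a t f := by
        obtain ⟨ht1, ht2⟩ := Finset.mem_Icc.mp ht
        rcases eq_or_lt_of_le ht1 with heq | hlt
        · rw [← heq]
          simp [ha1 f hf, hx0 f]
        · have h2 : x (t - 1) f = 0 ∨ x (t - 1) f = 1 :=
            hxbin (t - 1) (Finset.mem_Icc.mpr ⟨Nat.le_sub_one_of_lt hlt,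
              le_trans (Nat.sub_le t 1) ht2⟩) f hf
          have hc := hac t (Finset.mem_Icc.mpr ⟨hlt, ht2⟩) f hf
          rcases h2 with h2 | h2
          · rw [h2] at hc ⊢
            simpa using hc.1
          · rw [h2]
            have hab' := hab t ht f hf
            rcases hab' with h1 | h1 <;> rw [h1] <;> norm_num
      exact mul_le_mul_of_nonneg_left key hcoef
end
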